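/- arXiv:1608.04600 — 5 statements merged into one kernel-verified Lean document; each statement's English description precedes it below -/
import Mathlib

section
/- Fix β ∈ (0, 1/e), let ξ be the repelling real fixed point of E_β(x) = e^{βx} (so e^{βξ} = ξ and λ := βξ > 1), let L(x) = (log(x + ξ))/β − ξ for x ≥ 0, and set Ψ_n(x) = λ^n L^n(x). Then: (i) for every n ≥ 1, Ψ_n is differentiable on (0, ∞) and Ψ_n'(x) = ∏_{j=0}^{n-1} 1/(1 + L^j(x)/ξ) for all x > 0; (ii) for every N ∈ ℕ there exists x_N > 0 such that for all n ≥ N + 2 and all x ≥ x_N one has Ψ_n'(x) · ∏_{j=0}^{N} log^j(x) ≤ 1/2. -/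
open Filter MeasureTheory Set
open scoped Topology Real

noncomputable section

/-- The escaping set of an entire function: points whose iterates tend to infinity. -/
def escapingSet (f : ℂ → ℂ) : Set ℂ :=
  {z : ℂ | Tendsto (fun n : ℕ => ‖f^[n] z‖) atTop atTop}

/-- The maximum modulus `M(r, f)`. -/
def maxModulus (f : ℂ → ℂ) (r : ℝ) : ℝ :=
  sSup ((fun z => ‖f z‖) '' Metric.sphere (0 : ℂ) r)

/-- Critical values of `f`. -/
def criticalValues (f : ℂ → ℂ) : Set ℂ :=
  {a : ℂ | ∃ c : ℂ, deriv f c = 0 ∧ f c = a}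

/-- Finite asymptotic values of `f`. -/
def asymptoticValues (f : ℂ → ℂ) : Set ℂ :=
  {a : ℂ | ∃ γ : ℝ → ℂ, ContinuousOn γ (Set.Ici 0) ∧
    Tendsto (fun t => ‖γ t‖) atTop atTop ∧
    Tendsto (fun t => f (γ t)) atTop (𝓝 a)}

/-- The singular set `S(f)`. -/
def singularSet (f : ℂ → ℂ) : Set ℂ :=
  closure (criticalValues f ∪ asymptoticValues f)

def IsPolynomialFun (f : ℂ → ℂ) : Prop :=
  ∃ p : Polynomial ℂ, ∀ z, f z = p.eval z

/-- A transcendental entire function. -/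
def TranscendentalEntire (f : ℂ → ℂ) : Prop :=
  Differentiable ℂ f ∧ ¬ IsPolynomialFun f

/-- The Eremenko–Lyubich class `B`. -/
def EremenkoLyubichClass (f : ℂ → ℂ) : Prop :=
  TranscendentalEntire f ∧ Bornology.IsBounded (singularSet f)

/-- `θ(r)`: the measure of the set of angles at which `|f(r e^{it})| < r0`. -/
def thetaMeasure (f : ℂ → ℂ) (r0 r : ℝ) : ℝ :=
  (volume {t : ℝ | t ∈ Set.Icc 0 (2 * Real.pi) ∧
      ‖f ((r : ℂ) * Complex.exp (Complex.I * (t : ℂ)))‖ < r0}).toReal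

/-- The auxiliary map `L(x) = log(x + ξ)/β − ξ`. -/
def koenigsL (β ξ : ℝ) : ℝ → ℝ := fun y => Real.log (y + ξ) / β - ξ

/-- `Φ` is the Koenigs function associated to `β`: `ξ` is the repelling fixed point
of `E_β(x) = e^{βx}` with multiplier `λ = βξ > 1`, and
`Φ(x) = lim_{n→∞} λ^n L^n(x − ξ)` for `x ≥ ξ`. -/
def IsKoenigs (β ξ : ℝ) (Φ : ℝ → ℝ) : Prop :=
  Real.exp (β * ξ) = ξ ∧ 1 < β * ξ ∧
  ∀ x ≥ ξ, Tendsto (fun n : ℕ => (β * ξ) ^ n * (koenigsL β ξ)^[n] (x - ξ))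
    atTop (𝓝 (Φ x))

/-- `ε(r) = 1 / log Φ(r)`. -/
def epsK (Φ : ℝ → ℝ) (r : ℝ) : ℝ := 1 / Real.log (Φ r)

/-- The proximate order `ρ(r) = 1/2 + ε(r)`. -/
def rhoK (Φ : ℝ → ℝ) (r : ℝ) : ℝ := 1 / 2 + epsK Φ r

/-! The derivative formula is the chain rule: `L'(y) = 1/(β(y + ξ))` and `λ = βξ`, so each
application of `L` contributes the factor `ξ/(ξ + L^j x)`. Since `ξ = e^{βξ} > βξ` forces `β < 1`,
`L(y) ≥ (log y)/β - ξ` eventually dominates `log`, hence `log^j x ≤ L^j x` for `j ≤ N + 1` once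
`x` is large. The factors with `j ≤ N` then absorb `log^j x` at the cost of `ξ` each, the factor
`j = N + 1` is at most `ξ / L^{N+1} x`, which is tiny, and the remaining factors are at most `1`. -/

open Real Finset

lemma log_iterate_le_iterate {g : ℝ → ℝ} {y₀ : ℝ} (hy₀ : 0 < y₀) (hg : ∀ y ≥ y₀, log y ≤ g y)
    {x : ℝ} {j : ℕ} (h : ∀ i < j, y₀ ≤ log^[i] x) : log^[j] x ≤ g^[j] x := by
  induction j with
  | zero => rfl
  | succ j ih =>
    have hlog := h j j.lt_succ_self
    have hle := ih fun i hi ↦ h i (hi.trans j.lt_succ_self)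
    rw [Function.iterate_succ_apply', Function.iterate_succ_apply']
    calc log (log^[j] x) ≤ log (g^[j] x) := log_le_log (hy₀.trans_le hlog) hle
      _ ≤ g (g^[j] x) := hg _ (hlog.trans hle)

lemma prod_one_div_one_add_div_mul_prod_le {ξ : ℝ} (hξ : 0 < ξ) {a b : ℕ → ℝ} {N n : ℕ}
    (hn : N + 2 ≤ n) (hb : ∀ j, 0 ≤ b j) (ha : ∀ j ∈ range (N + 1), 0 ≤ a j ∧ a j ≤ b j)
    (hbN : 0 < b (N + 1)) :
    (∏ j ∈ range n, 1 / (1 + b j / ξ)) * ∏ j ∈ range (N + 1), a j ≤ ξ ^ (N + 2) / b (N + 1) := by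
  have hfactor : ∀ j, 1 / (1 + b j / ξ) = ξ / (ξ + b j) := fun j ↦ by
    field_simp
  simp only [hfactor]
  have hnonneg : ∀ j, 0 ≤ ξ / (ξ + b j) := fun j ↦ div_nonneg hξ.le (add_nonneg hξ.le (hb j))
  have hdrop : ∏ j ∈ range n, ξ / (ξ + b j) ≤ ∏ j ∈ range (N + 2), ξ / (ξ + b j) :=
    prod_le_prod_of_subset_of_le_one (range_subset_range.2 hn) (fun j _ ↦ hnonneg j)
      fun j _ _ ↦ div_le_one_of_le₀ (by linarith [hb j]) (add_nonneg hξ.le (hb j))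
  have habsorb : ∀ j ∈ range (N + 1), ξ / (ξ + b j) * a j ≤ ξ := fun j hj ↦ by
    obtain ⟨ha0, hab⟩ := ha j hj
    rw [div_mul_eq_mul_div, div_le_iff₀ (by linarith)]
    nlinarith
  have hlast : ξ / (ξ + b (N + 1)) ≤ ξ / b (N + 1) :=
    div_le_div_of_nonneg_left hξ.le hbN (by linarith)
  calc (∏ j ∈ range n, ξ / (ξ + b j)) * ∏ j ∈ range (N + 1), a j
      ≤ (∏ j ∈ range (N + 2), ξ / (ξ + b j)) * ∏ j ∈ range (N + 1), a j :=
        mul_le_mul_of_nonneg_right hdrop (prod_nonneg fun j hj ↦ (ha j hj).1)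
    _ = (∏ j ∈ range (N + 1), ξ / (ξ + b j) * a j) * (ξ / (ξ + b (N + 1))) := by
        rw [prod_range_succ, prod_mul_distrib]; ring
    _ ≤ ξ ^ (N + 1) * (ξ / b (N + 1)) := by
        refine mul_le_mul ?_ hlast (hnonneg _) (pow_nonneg hξ.le _)
        simpa using prod_le_prod (fun j hj ↦ mul_nonneg (hnonneg j) (ha j hj).1) habsorb
    _ = ξ ^ (N + 2) / b (N + 1) := by ring

section FixedPoint

variable {β ξ : ℝ}

lemma pos_of_exp_mul_eq (h : exp (β * ξ) = ξ) : 0 < ξ := h ▸ exp_pos _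

lemma log_eq_of_exp_mul_eq (h : exp (β * ξ) = ξ) : log ξ = β * ξ := by
  rw [← h, log_exp, h]

lemma lt_one_of_exp_mul_eq (h : exp (β * ξ) = ξ) : β < 1 := by
  have hξ := pos_of_exp_mul_eq h
  have : β * ξ + 1 ≤ exp (β * ξ) := add_one_le_exp _
  rw [h] at this
  nlinarith

end FixedPoint

section KoenigsL

variable {β ξ : ℝ}

lemma koenigsL_pos (hβ : 0 < β) (hξ : exp (β * ξ) = ξ) {y : ℝ} (hy : 0 < y) :
    0 < koenigsL β ξ y := by
  have hlog : β * ξ < log (y + ξ) :=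
    log_eq_of_exp_mul_eq hξ ▸ log_lt_log (pos_of_exp_mul_eq hξ) (by linarith)
  rw [koenigsL, sub_pos, lt_div_iff₀ hβ]
  linarith

lemma koenigsL_iterate_pos (hβ : 0 < β) (hξ : exp (β * ξ) = ξ) (j : ℕ) {x : ℝ} (hx : 0 < x) :
    0 < (koenigsL β ξ)^[j] x :=
  MapsTo.iterate (fun _ hy ↦ koenigsL_pos hβ hξ hy) j hx

lemma hasDerivAt_koenigsL {x : ℝ} (hx : x + ξ ≠ 0) :
    HasDerivAt (koenigsL β ξ) ((x + ξ)⁻¹ / β) x := by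
  show HasDerivAt (fun y ↦ log (y + ξ) / β - ξ) _ x
  simpa using (((hasDerivAt_id x).add_const ξ).log hx).div_const β |>.sub_const ξ

lemma hasDerivAt_pow_mul_koenigsL_iterate (hβ : 0 < β) (hξ : exp (β * ξ) = ξ) (n : ℕ) {x : ℝ}
    (hx : 0 < x) :
    HasDerivAt (fun y ↦ (β * ξ) ^ n * (koenigsL β ξ)^[n] y)
      (∏ j ∈ range n, 1 / (1 + (koenigsL β ξ)^[j] x / ξ)) x := by
  induction n generalizing x with
  | zero => simpa using hasDerivAt_id' x
  | succ n ih =>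
    have hξ0 := pos_of_exp_mul_eq hξ
    have hL := hasDerivAt_koenigsL (β := β) (ne_of_gt (add_pos hx hξ0))
    have hcomp := ((ih (koenigsL_pos hβ hξ hx)).comp x hL).const_mul (β * ξ)
    have hfactor : β * ξ * ((x + ξ)⁻¹ / β) = 1 / (1 + x / ξ) := by
      field_simp
      ring
    have hfun : (fun y ↦ (β * ξ) ^ (n + 1) * (koenigsL β ξ)^[n + 1] y) =
        fun y ↦ β * ξ * ((β * ξ) ^ n * (koenigsL β ξ)^[n] (koenigsL β ξ y)) := by
      funext y
      rw [Function.iterate_succ_apply, pow_succ]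
      ring
    rw [hfun, prod_range_succ', Function.iterate_zero_apply, ← hfactor]
    simp only [Function.iterate_succ_apply]
    exact hcomp.congr_deriv (by ring)

lemma log_le_koenigsL (hβ : 0 < β) (hξ : 0 < ξ) {y : ℝ} (hy : 0 < y)
    (h : β * ξ ≤ (1 - β) * log y) : log y ≤ koenigsL β ξ y := by
  have : log y ≤ log (y + ξ) := log_le_log hy (by linarith)
  rw [koenigsL, le_sub_iff_add_le, le_div_iff₀ hβ]
  nlinarith

lemma eventually_log_le_koenigsL (hβ : 0 < β) (hξ : exp (β * ξ) = ξ) :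
    ∀ᶠ y in atTop, log y ≤ koenigsL β ξ y := by
  have hβ1 : 0 < 1 - β := sub_pos.2 (lt_one_of_exp_mul_eq hξ)
  have hgrowth : Tendsto (fun y ↦ (1 - β) * log y) atTop atTop :=
    tendsto_log_atTop.const_mul_atTop hβ1
  filter_upwards [hgrowth.eventually_ge_atTop (β * ξ), eventually_gt_atTop 0] with y hy hy0
  exact log_le_koenigsL hβ (pos_of_exp_mul_eq hξ) hy0 hy

lemma eventually_le_log_iterate_le_koenigsL_iterate (hβ : 0 < β) (hξ : exp (β * ξ) = ξ)
    (c : ℝ) (m : ℕ) :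
    ∀ᶠ x in atTop, ∀ j ∈ range m, c ≤ log^[j] x ∧ log^[j] x ≤ (koenigsL β ξ)^[j] x := by
  obtain ⟨y₁, hy₁⟩ := eventually_atTop.1 (eventually_log_le_koenigsL hβ hξ)
  set y₀ := max (max y₁ 1) c
  have hy₀ : 0 < y₀ := zero_lt_one.trans_le ((le_max_right _ _).trans (le_max_left _ _))
  have hg : ∀ y ≥ y₀, log y ≤ koenigsL β ξ y := fun y hy ↦
    hy₁ y ((le_max_left _ _).trans ((le_max_left _ _).trans hy))
  have hlarge : ∀ᶠ x in atTop, ∀ i ∈ range m, y₀ ≤ log^[i] x :=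
    (eventually_all_finset _).2 fun i _ ↦ (tendsto_log_atTop.iterate i).eventually_ge_atTop y₀
  filter_upwards [hlarge] with x hx j hj
  refine ⟨(le_max_right _ _).trans (hx j hj), log_iterate_le_iterate hy₀ hg fun i hi ↦ ?_⟩
  exact hx i (mem_range.2 (hi.trans (mem_range.1 hj)))

end KoenigsL

theorem stmt8_general (β ξ : ℝ) (hβ0 : 0 < β)
    (hξfix : Real.exp (β * ξ) = ξ) :
    (∀ n : ℕ, 1 ≤ n → ∀ x : ℝ, 0 < x →
      HasDerivAt (fun y => (β * ξ) ^ n * (koenigsL β ξ)^[n] y)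
        (∏ j ∈ Finset.range n, 1 / (1 + (koenigsL β ξ)^[j] x / ξ)) x) ∧
    (∀ N : ℕ, ∃ xN > (0 : ℝ), ∀ n : ℕ, N + 2 ≤ n → ∀ x ≥ xN,
      deriv (fun y => (β * ξ) ^ n * (koenigsL β ξ)^[n] y) x *
          ∏ j ∈ Finset.range (N + 1), Real.log^[j] x ≤ 1 / 2) := by
  refine ⟨fun n _ x hx ↦ hasDerivAt_pow_mul_koenigsL_iterate hβ0 hξfix n hx, fun N ↦ ?_⟩
  have hξ := pos_of_exp_mul_eq hξfix
  have hc : 0 < 2 * ξ ^ (N + 2) := by positivity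
  obtain ⟨x₀, hx₀⟩ := eventually_atTop.1
    (eventually_le_log_iterate_le_koenigsL_iterate hβ0 hξfix (2 * ξ ^ (N + 2)) (N + 2))
  refine ⟨max x₀ 1, by positivity, fun n hn x hx ↦ ?_⟩
  have hlog := hx₀ x (le_of_max_le_left hx)
  have hsub : range (N + 1) ⊆ range (N + 2) := range_subset_range.2 (by omega)
  have hx0 : 0 < x := hc.trans_le (hlog 0 (by simp)).1
  have hbig : 2 * ξ ^ (N + 2) ≤ (koenigsL β ξ)^[N + 1] x :=
    (hlog (N + 1) (by simp)).1.trans (hlog (N + 1) (by simp)).2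
  have hpos : 0 < (koenigsL β ξ)^[N + 1] x := koenigsL_iterate_pos hβ0 hξfix _ hx0
  rw [(hasDerivAt_pow_mul_koenigsL_iterate hβ0 hξfix n hx0).deriv]
  calc _ ≤ ξ ^ (N + 2) / (koenigsL β ξ)^[N + 1] x :=
        prod_one_div_one_add_div_mul_prod_le hξ hn
          (fun j ↦ (koenigsL_iterate_pos hβ0 hξfix j hx0).le)
          (fun j hj ↦ ⟨hc.le.trans (hlog j (hsub hj)).1, (hlog j (hsub hj)).2⟩) hpos
    _ ≤ 1 / 2 := by
        rw [div_le_div_iff₀ hpos two_pos]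
        linarith

/-- with `Ψ_n(x) = λ^n L^n(x)`, (i) `Ψ_n` is differentiable on `(0,∞)` with
`Ψ_n'(x) = ∏_{j=0}^{n-1} 1/(1 + L^j(x)/ξ)`, and (ii) for every `N` there is `x_N > 0`
such that `Ψ_n'(x) ∏_{j=0}^N log^j(x) ≤ 1/2` for all `n ≥ N + 2` and `x ≥ x_N`. -/
theorem stmt8 (β ξ : ℝ) (hβ0 : 0 < β) (hβ1 : β < 1 / Real.exp 1)
    (hξfix : Real.exp (β * ξ) = ξ) (hmult : 1 < β * ξ) :
    (∀ n : ℕ, 1 ≤ n → ∀ x : ℝ, 0 < x →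
      HasDerivAt (fun y => (β * ξ) ^ n * (koenigsL β ξ)^[n] y)
        (∏ j ∈ Finset.range n, 1 / (1 + (koenigsL β ξ)^[j] x / ξ)) x) ∧
    (∀ N : ℕ, ∃ xN > (0 : ℝ), ∀ n : ℕ, N + 2 ≤ n → ∀ x ≥ xN,
      deriv (fun y => (β * ξ) ^ n * (koenigsL β ξ)^[n] y) x *
          ∏ j ∈ Finset.range (N + 1), Real.log^[j] x ≤ 1 / 2) :=
  stmt8_general β ξ hβ0 hξfix
end
end

section
/- Let ξ > e, β = (log ξ)/ξ, and λ = log ξ (so 0 < β < 1/e, λ > 1 and e^{βξ} = ξ). Let Φ : [ξ, ∞) → ℝ be nondecreasing with Φ(e^{βx}) = λ · Φ(x) for all x ≥ ξ, and suppose Φ(x1) > 1 for some x1 ≥ ξ. Then for every x ≥ ξ there exists k0 ∈ ℕ such that Φ(E^k(x)) > 1 for all k ≥ k0 and the series ∑_{k ≥ k0} 1/log Φ(E^k(x)) diverges. -/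
/-!
Write `g y = exp (β y)`. On `[ξ, ∞)` we have `y ≤ g y` (this is `log y / y ≤ log ξ / ξ`), and
`exp y ≤ g (g y)` once `y` is large, so `E^k x ≤ g^[2k] z` for a suitable fixed `z`. Monotonicity
and the functional equation then give `Φ (E^k x) ≤ λ^(2k) Φ z`: the numbers `log Φ (E^k x)` grow
at most linearly in `k`, and the series diverges by comparison with the harmonic series.
-/

open Filter Real Finset

theorem tendsto_sum_one_div_atTop_of_le_linear {a : ℕ → ℝ} {A B : ℝ} (hB : 0 ≤ B)
    (ha : ∀ k, 0 < a k) (hle : ∀ k, a k ≤ A + B * k) :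
    Tendsto (fun n => ∑ k ∈ range n, 1 / a k) atTop atTop := by
  have hA : 0 < A := by simpa using (ha 0).trans_le (hle 0)
  have hcmp : ∀ k : ℕ, 1 / (A + B) * (1 / (k + 1)) ≤ 1 / a k := fun k => by
    rw [div_mul_div_comm, one_mul]
    refine one_div_le_one_div_of_le (ha k) ((hle k).trans ?_)
    nlinarith [k.cast_nonneg (α := ℝ)]
  refine tendsto_atTop_mono (fun n => sum_le_sum fun k _ => hcmp k) ?_
  simp only [← mul_sum]
  exact tendsto_sum_range_one_div_nat_succ_atTop.const_mul_atTop (by positivity)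

theorem tendsto_sum_one_div_log_atTop_of_le_geometric {u : ℕ → ℝ} {M q : ℝ} (hq : 1 ≤ q)
    (hu : ∀ k, 1 < u k) (hle : ∀ k, u k ≤ M * q ^ k) :
    Tendsto (fun n => ∑ k ∈ range n, 1 / log (u k)) atTop atTop := by
  have hM : 0 < M := by simpa using one_pos.trans ((hu 0).trans_le (hle 0))
  refine tendsto_sum_one_div_atTop_of_le_linear (A := log M) (log_nonneg hq)
    (fun k => log_pos (hu k)) fun k => ?_
  calc log (u k) ≤ log (M * q ^ k) := log_le_log (one_pos.trans (hu k)) (hle k)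
    _ = log M + log q * k := by
      rw [log_mul hM.ne' (by positivity), log_pow, mul_comm]

theorem iterate_apply_eq_pow_mul {α M : Type*} [Monoid M] {Φ : α → M} {g : α → α} {s : Set α}
    {c : M} (hs : Set.MapsTo g s s) (h : ∀ y ∈ s, Φ (g y) = c * Φ y) {y : α} (hy : y ∈ s) :
    ∀ m : ℕ, Φ (g^[m] y) = c ^ m * Φ y
  | 0 => by simp
  | m + 1 => by
    rw [Function.iterate_succ_apply', h _ (hs.iterate m hy), iterate_apply_eq_pow_mul hs h hy m,
      pow_succ', mul_assoc]

theorem add_le_iterate_exp (x : ℝ) (k : ℕ) : x + k ≤ exp^[k] x := by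
  induction k with
  | zero => simp
  | succ k ih =>
    rw [Function.iterate_succ_apply']
    push_cast
    linarith [add_one_le_exp (exp^[k] x)]

theorem iterate_exp_le_iterate_two_mul {g : ℝ → ℝ} {a x z : ℝ} (hg : ∀ y, a ≤ y → y ≤ g y)
    (hexp : ∀ y, a ≤ y → exp y ≤ g (g y)) (hxz : x ≤ z) (hz : a ≤ z) (k : ℕ) :
    exp^[k] x ≤ g^[2 * k] z := by
  have hmaps : Set.MapsTo g (Set.Ici a) (Set.Ici a) := fun y hy => le_trans hy (hg y hy)
  induction k with
  | zero => simpa using hxz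
  | succ k ih =>
    rw [Function.iterate_succ_apply', show 2 * (k + 1) = 2 + 2 * k by ring,
      Function.iterate_add_apply]
    exact (exp_le_exp.2 ih).trans (hexp _ (hmaps.iterate (2 * k) hz))

theorem le_exp_log_div_mul {ξ y : ℝ} (hξ : exp 1 ≤ ξ) (hy : ξ ≤ y) :
    y ≤ exp (log ξ / ξ * y) := by
  have hy0 : 0 < y := (exp_pos 1).trans_le (hξ.trans hy)
  have hlog : log y / y ≤ log ξ / ξ := log_div_self_antitoneOn hξ (hξ.trans hy) hy
  calc y = exp (log y) := (exp_log hy0).symm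
    _ ≤ exp (log ξ / ξ * y) := exp_le_exp.2 (by rwa [div_le_iff₀ hy0] at hlog)

theorem exp_le_exp_mul_exp_mul {β y : ℝ} (hβ : 0 < β) (hy : 2 / β ^ 3 ≤ y) :
    exp y ≤ exp (β * exp (β * y)) := by
  have hy0 : 0 < y := (by positivity : 0 < 2 / β ^ 3).trans_le hy
  have hβy : 2 ≤ β ^ 3 * y := by rwa [div_le_iff₀' (by positivity)] at hy
  have hquad := quadratic_le_exp_of_nonneg (by positivity : 0 ≤ β * y)
  refine exp_le_exp.2 ?_
  nlinarith [mul_le_mul_of_nonneg_left hquad hβ.le, mul_le_mul_of_nonneg_right hβy hy0.le]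

theorem exists_iterate_exp_le_iterate_exp_log_div_mul {ξ : ℝ} (hξ : exp 1 < ξ) (x : ℝ) :
    ∃ z, ξ ≤ z ∧ ∀ k, exp^[k] x ≤ (fun y => exp (log ξ / ξ * y))^[2 * k] z := by
  have hξ0 : 0 < ξ := (exp_pos 1).trans hξ
  have hβ : 0 < log ξ / ξ := div_pos (log_pos ((one_lt_exp_iff.2 one_pos).trans hξ)) hξ0
  set a := max ξ (2 / (log ξ / ξ) ^ 3)
  refine ⟨max x a, (le_max_left _ _).trans (le_max_right _ _), ?_⟩
  exact iterate_exp_le_iterate_two_mul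
    (fun y hy => le_exp_log_div_mul hξ.le ((le_max_left _ _).trans hy))
    (fun y hy => exp_le_exp_mul_exp_mul hβ ((le_max_right _ _).trans hy))
    (le_max_left x a) (le_max_right x a)

/-- let `ξ > e`, `β = log ξ / ξ`, `λ = log ξ`, and let `Φ` be nondecreasing
on `[ξ, ∞)` with `Φ(e^{βx}) = λ Φ(x)` and `Φ(x1) > 1` for some `x1 ≥ ξ`. Then for every
`x ≥ ξ` there is `k0` with `Φ(E^k(x)) > 1` for `k ≥ k0` and
`∑_{k ≥ k0} 1/log Φ(E^k(x)) = ∞`. -/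
theorem stmt14 (ξ : ℝ) (hξ : Real.exp 1 < ξ) (Φ : ℝ → ℝ)
    (hmono : ∀ x y : ℝ, ξ ≤ x → x ≤ y → Φ x ≤ Φ y)
    (heq : ∀ x ≥ ξ, Φ (Real.exp ((Real.log ξ / ξ) * x)) = Real.log ξ * Φ x)
    (x1 : ℝ) (hx1 : ξ ≤ x1) (hΦx1 : 1 < Φ x1) :
    ∀ x ≥ ξ, ∃ k0 : ℕ,
      (∀ k : ℕ, k0 ≤ k → 1 < Φ (Real.exp^[k] x)) ∧
      Tendsto (fun n : ℕ => ∑ k ∈ Finset.range n,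
          1 / Real.log (Φ (Real.exp^[k0 + k] x))) atTop atTop := by
  intro x hx
  obtain ⟨z, hz, hxz⟩ := exists_iterate_exp_le_iterate_exp_log_div_mul hξ x
  have hlog : 1 < log ξ := by simpa using log_lt_log (exp_pos 1) hξ
  have hgz := iterate_apply_eq_pow_mul (s := Set.Ici ξ)
    (fun y hy => le_trans hy (le_exp_log_div_mul hξ.le hy)) heq hz
  have hx_iter : ∀ k, ξ ≤ exp^[k] x := fun k => by
    linarith [add_le_iterate_exp x k, k.cast_nonneg (α := ℝ)]
  have hub : ∀ k, Φ (exp^[k] x) ≤ Φ z * (log ξ ^ 2) ^ k := fun k => by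
    rw [mul_comm, ← pow_mul, ← hgz]
    exact hmono _ _ (hx_iter k) (hxz k)
  have hgt : ∀ k, ⌈x1⌉₊ ≤ k → 1 < Φ (exp^[k] x) := fun k hk => by
    refine hΦx1.trans_le (hmono _ _ hx1 ?_)
    have : (⌈x1⌉₊ : ℝ) ≤ k := by exact_mod_cast hk
    linarith [Nat.le_ceil x1, add_le_iterate_exp x k, exp_pos 1]
  refine ⟨⌈x1⌉₊, hgt, tendsto_sum_one_div_log_atTop_of_le_geometric
    (M := Φ z * (log ξ ^ 2) ^ ⌈x1⌉₊) (one_le_pow₀ (n := 2) hlog.le)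
    (fun k => hgt _ (Nat.le_add_right _ _)) fun k => ?_⟩
  rw [mul_assoc, ← pow_add]
  exact hub _
end

section
/- Let 0 < β < 1 and define F_β(y) = β e^y (so F_1(y) = e^y). Let c > log(2/β) and let x ∈ ℝ with e^x > c. Then for every k ≥ 1 one has F_β^k(x + c) ≥ F_1^k(x) + c. Consequently, with E_β(y) = e^{βy} and E(y) = e^y, one has E_β^k((x + c)/β) > E^k(x) for every k ≥ 1. -/
/-!
Write `aₖ = exp^[k] x` and `bₖ = F_β^[k] (x + c)`. The hypothesis on `c` says `β e^c > 2`, so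
`aₖ + c ≤ bₖ` propagates: `β e^{bₖ} ≥ β e^c e^{aₖ} ≥ 2 e^{aₖ} ≥ e^{aₖ} + c`, the last step because
`aₖ₊₁ ≥ a₁ = e^x > c`. The maps `y ↦ e^{βy}` and `F_β` are conjugate via `t ↦ t / β`, so the second
inequality reads `aₖ < bₖ / β`, which follows from the first as `β aₖ < aₖ` for `aₖ > c > 0`.
-/

lemma semiconj_div_mul_exp_exp_mul {β : ℝ} (hβ : β ≠ 0) :
    Function.Semiconj (· / β) (fun y => β * Real.exp y) (fun y => Real.exp (β * y)) := by
  intro t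
  field_simp

lemma le_exp_iterate_succ (x : ℝ) (k : ℕ) : Real.exp x ≤ Real.exp^[k + 1] x := by
  rw [Function.iterate_succ_apply]
  exact Function.id_le_iterate_of_id_le (fun y => show y ≤ Real.exp y by linarith [Real.add_one_le_exp y]) k _

lemma exp_add_le_mul_exp {β c A B : ℝ} (hβc : 2 < β * Real.exp c) (hcA : c < Real.exp A)
    (hAB : A + c ≤ B) : Real.exp A + c ≤ β * Real.exp B := by
  have hβ : 0 < β := pos_of_mul_pos_left (by linarith) (Real.exp_pos c).le
  calc Real.exp A + c ≤ 2 * Real.exp A := by linarith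
    _ ≤ β * Real.exp c * Real.exp A := by gcongr
    _ = β * Real.exp (A + c) := by rw [Real.exp_add]; ring
    _ ≤ β * Real.exp B := by gcongr

lemma exp_iterate_add_le_mul_exp_iterate {β c x : ℝ} (hβc : 2 < β * Real.exp c)
    (hx : c < Real.exp x) (k : ℕ) :
    Real.exp^[k] x + c ≤ (fun y => β * Real.exp y)^[k] (x + c) := by
  induction k with
  | zero => simp
  | succ k ih =>
    rw [Function.iterate_succ_apply', Function.iterate_succ_apply']
    refine exp_add_le_mul_exp hβc ?_ ih
    rw [← Function.iterate_succ_apply' Real.exp]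
    exact hx.trans_le (le_exp_iterate_succ x k)

/-- with `F_β(y) = β e^y`, if `c > log(2/β)` and `e^x > c`, then
`F_β^k(x + c) ≥ F_1^k(x) + c` for every `k ≥ 1`; consequently, with `E_β(y) = e^{βy}`
and `E(y) = e^y`, one has `E_β^k((x + c)/β) > E^k(x)` for every `k ≥ 1`. -/
theorem stmt15 (β : ℝ) (hβ0 : 0 < β) (hβ1 : β < 1)
    (c x : ℝ) (hc : Real.log (2 / β) < c) (hx : c < Real.exp x) :
    ∀ k : ℕ, 1 ≤ k →
      Real.exp^[k] x + c ≤ (fun y => β * Real.exp y)^[k] (x + c) ∧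
      Real.exp^[k] x < (fun y => Real.exp (β * y))^[k] ((x + c) / β) := by
  have hβc : 2 < β * Real.exp c :=
    (div_lt_iff₀' hβ0).mp ((Real.log_lt_iff_lt_exp (by positivity)).mp hc)
  have hc0 : 0 < c :=
    (Real.log_pos ((one_lt_div hβ0).mpr (by linarith))).trans hc
  intro k hk
  obtain ⟨n, rfl⟩ := Nat.exists_eq_add_of_le' hk
  have hF := exp_iterate_add_le_mul_exp_iterate hβc hx (n + 1)
  have ha : 0 < Real.exp^[n + 1] x := hc0.trans (hx.trans_le (le_exp_iterate_succ x n))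
  refine ⟨hF, ?_⟩
  rw [← (semiconj_div_mul_exp_exp_mul hβ0.ne').iterate_right (n + 1) (x + c), lt_div_iff₀ hβ0]
  calc Real.exp^[n + 1] x * β < Real.exp^[n + 1] x := mul_lt_of_lt_one_right ha hβ1
    _ ≤ _ := by linarith
end

section
/- Let S ⊆ ℂ be a Lebesgue measurable set with S + 2πi = S, and let φ(x) denote the one-dimensional Lebesgue measure of {y ∈ [0, 2π] : x + iy ∈ S}. Let x0 ≥ 0 and let φ0 : [x0, ∞) → [0, ∞) be nonincreasing with φ(x) ≥ φ0(x) for all x ≥ x0. Let w ∈ ℂ with Re w ≥ 64π and (63/64)·Re w ≥ x0, and let Q = {z ∈ ℂ : |Re(z − w)| ≤ Re w / 64 and |Im(z − w)| ≤ Re w / 64}. Then area(S ∩ Q) / area(Q) ≥ (1/(4π)) · φ0((65/64)·Re w). -/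
/-!
Write `Q = [a, b] ×ℂ [c, d]` with `b - a = d - c = 2r`, `r = Re w / 64 ≥ π`. Every vertical
slice of `S` is `2π`-periodic, and `[c, d]` contains `n ≥ r / (2π)` disjoint periods, so for
`x ∈ [a, b]` the slice meets `[c, d]` in measure at least `n φ(x) ≥ n φ0(b)`. By Fubini,
`area(S ∩ Q) ≥ 2r · n · φ0(b) ≥ (2r)² φ0(b) / (4π)`.
-/

open MeasureTheory Set Complex
open scoped Real ENNReal

theorem measure_inter_Ioc_add_eq_of_periodic {A : Set ℝ} (hA : MeasurableSet A) {p : ℝ}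
    (hp : 0 < p) (hper : Function.Periodic (· ∈ A) p) (c : ℝ) :
    volume (A ∩ Ioc c (c + p)) = volume (A ∩ Ioc 0 p) := by
  have : VAddInvariantMeasure (AddSubgroup.zmultiples p) ℝ volume :=
    ⟨fun c s _ => measure_preimage_add _ _ _⟩
  have hinv : ∀ g : AddSubgroup.zmultiples p, (g +ᵥ ·) ⁻¹' A = A := by
    rintro ⟨_, m, rfl⟩
    ext y
    show m • p + y ∈ A ↔ y ∈ A
    rw [add_comm]
    exact (hper.zsmul m y).to_iff
  have := (isAddFundamentalDomain_Ioc hp c).measure_set_eq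
    (isAddFundamentalDomain_Ioc hp 0) hA hinv
  rwa [zero_add] at this

theorem natCast_mul_measure_inter_Ioc_le_of_periodic {A : Set ℝ} (hA : MeasurableSet A) {p : ℝ}
    (hp : 0 < p) (hper : Function.Periodic (· ∈ A) p) (n : ℕ) {c d : ℝ}
    (hcd : c + n * p ≤ d) :
    n * volume (A ∩ Ioc 0 p) ≤ volume (A ∩ Ioc c d) := by
  induction n generalizing c with
  | zero => simp
  | succ n ih =>
    have hcp : c + p ≤ d := by push_cast at hcd; nlinarith [n.cast_nonneg (α := ℝ)]
    calc ((n + 1 : ℕ) : ℝ≥0∞) * volume (A ∩ Ioc 0 p)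
        = volume (A ∩ Ioc c (c + p)) + n * volume (A ∩ Ioc 0 p) := by
          rw [measure_inter_Ioc_add_eq_of_periodic hA hp hper c]; push_cast; ring
      _ ≤ volume (A ∩ Ioc c (c + p)) + volume (A ∩ Ioc (c + p) d) := by
          gcongr; exact ih (by push_cast at hcd; linarith)
      _ = volume (A ∩ Ioc c (c + p) ∪ A ∩ Ioc (c + p) d) :=
          (measure_union ((Ioc_disjoint_Ioc_of_le le_rfl).mono inter_subset_right
            inter_subset_right) (hA.inter measurableSet_Ioc)).symm
      _ = volume (A ∩ Ioc c d) := by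
          rw [← inter_union_distrib_left, Ioc_union_Ioc_eq_Ioc (by linarith) hcp]

theorem exists_nat_mul_le_le_two_mul {p r : ℝ} (hp : 0 < p) (hpr : p ≤ r) :
    ∃ n : ℕ, n * p ≤ r ∧ r ≤ 2 * n * p := by
  have hrp : 0 ≤ r / p := div_nonneg (hp.le.trans hpr) hp.le
  refine ⟨⌊r / p⌋₊, (le_div_iff₀ hp).1 (Nat.floor_le hrp), ?_⟩
  have h1 : (1 : ℝ) ≤ ⌊r / p⌋₊ := by
    exact_mod_cast (Nat.one_le_floor_iff _).2 ((one_le_div hp).2 hpr)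
  have h2 := (div_lt_iff₀ hp).1 (Nat.lt_floor_add_one (r / p))
  nlinarith

def verticalSlice (S : Set ℂ) (x : ℝ) : Set ℝ := {y | (x : ℂ) + y * I ∈ S}

theorem measurableSet_verticalSlice {S : Set ℂ} (hS : MeasurableSet S) (x : ℝ) :
    MeasurableSet (verticalSlice S x) :=
  hS.preimage (by fun_prop)

theorem periodic_mem_verticalSlice {S : Set ℂ} {p : ℝ} (hS : (· + p * I) '' S = S) (x : ℝ) :
    Function.Periodic (· ∈ verticalSlice S x) p := by
  intro y
  have hadd : ((x : ℂ) + (y + p : ℝ) * I) = (x + y * I) + p * I := by push_cast; ring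
  simp only [verticalSlice, mem_ofPred_eq, hadd]
  conv_lhs => rw [← hS]
  exact propext (add_left_injective _).mem_set_image

theorem volume_inter_reProdIm {S : Set ℂ} {s t : Set ℝ} (hS : MeasurableSet S)
    (hs : MeasurableSet s) (ht : MeasurableSet t) :
    volume (S ∩ s ×ℂ t) = ∫⁻ x in s, volume (t ∩ verticalSlice S x) := by
  have hT : MeasurableSet (measurableEquivRealProd.symm ⁻¹' (S ∩ s ×ℂ t)) :=
    measurableEquivRealProd.symm.measurable
      (hS.inter ((hs.preimage measurable_re).inter (ht.preimage measurable_im)))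
  rw [← volume_preserving_equiv_real_prod.symm.measure_preimage_equiv, Measure.volume_eq_prod,
    Measure.prod_apply hT, ← lintegral_indicator hs]
  congr with x
  by_cases hx : x ∈ s
  · rw [indicator_of_mem hx]
    congr 1 with y
    simp [hx, mem_reProdIm, verticalSlice, ← mk_eq_add_mul_I, and_comm]
  · rw [indicator_of_notMem hx, ← measure_empty (μ := (volume : Measure ℝ))]
    congr 1 with y
    simp [hx, mem_reProdIm]

theorem volume_reProdIm {s t : Set ℝ} (hs : MeasurableSet s) (ht : MeasurableSet t) :
    volume (s ×ℂ t) = volume s * volume t := by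
  simpa [verticalSlice, setLIntegral_const, mul_comm] using
    volume_inter_reProdIm MeasurableSet.univ hs ht

theorem le_volume_inter_reProdIm_of_periodic {S : Set ℂ} (hS : MeasurableSet S) {p : ℝ}
    (hp : 0 < p) (hper : (· + p * I) '' S = S) {a b c d : ℝ} {m : ℝ≥0∞} (n : ℕ)
    (hcd : c + n * p ≤ d) (hm : ∀ x ∈ Icc a b, m ≤ volume (Icc 0 p ∩ verticalSlice S x)) :
    ENNReal.ofReal (b - a) * (n * m) ≤ volume (S ∩ Icc a b ×ℂ Icc c d) := by
  rw [volume_inter_reProdIm hS measurableSet_Icc measurableSet_Icc, ← Real.volume_Icc, mul_comm,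
    ← setLIntegral_const]
  refine setLIntegral_mono' measurableSet_Icc fun x hx => ?_
  calc n * m ≤ n * volume (verticalSlice S x ∩ Ioc 0 p) := by
        rw [inter_comm, measure_congr
          ((Ioc_ae_eq_Icc (μ := volume)).inter (ae_eq_refl (verticalSlice S x)))]
        gcongr
        exact hm x hx
    _ ≤ volume (verticalSlice S x ∩ Ioc c d) :=
        natCast_mul_measure_inter_Ioc_le_of_periodic (measurableSet_verticalSlice hS x) hp
          (periodic_mem_verticalSlice hper x) n hcd
    _ ≤ volume (Icc c d ∩ verticalSlice S x) := by
        rw [inter_comm]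
        exact measure_mono (inter_subset_inter_left _ Ioc_subset_Icc_self)

theorem setOf_abs_sub_le_eq_reProdIm (w : ℂ) (r : ℝ) :
    {z : ℂ | |(z - w).re| ≤ r ∧ |(z - w).im| ≤ r} =
      Icc (w.re - r) (w.re + r) ×ℂ Icc (w.im - r) (w.im + r) := by
  ext z
  simp only [mem_ofPred_eq, mem_reProdIm, mem_Icc, sub_re, sub_im, abs_le]
  constructor <;> rintro ⟨⟨_, _⟩, _, _⟩ <;> refine ⟨⟨?_, ?_⟩, ?_, ?_⟩ <;> linarith

theorem stmt17_general (S : Set ℂ) (hSmeas : MeasurableSet S)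
    (hSper : (fun z => z + 2 * (π : ℂ) * Complex.I) '' S = S)
    (x0 : ℝ) (φ0 : ℝ → ℝ)
    (hφ0mono : ∀ x y : ℝ, x0 ≤ x → x ≤ y → φ0 y ≤ φ0 x)
    (hφ : ∀ x ≥ x0, φ0 x ≤
      (volume {y : ℝ | y ∈ Set.Icc 0 (2 * π) ∧ ((x : ℂ) + (y : ℂ) * Complex.I) ∈ S}).toReal)
    (w : ℂ) (hw1 : 64 * π ≤ w.re) (hw2 : x0 ≤ 63 / 64 * w.re) :
    (1 / (4 * π)) * φ0 (65 / 64 * w.re) ≤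
      (volume (S ∩ {z : ℂ | |(z - w).re| ≤ w.re / 64 ∧ |(z - w).im| ≤ w.re / 64})).toReal /
        (volume {z : ℂ | |(z - w).re| ≤ w.re / 64 ∧ |(z - w).im| ≤ w.re / 64}).toReal := by
  set r := w.re / 64 with hr_def
  set φb := φ0 (65 / 64 * w.re)
  have hπr : π ≤ r := by linarith
  have hr : 0 < r := Real.pi_pos.trans_le hπr
  obtain ⟨n, hnr, hrn⟩ := exists_nat_mul_le_le_two_mul Real.pi_pos hπr
  have hslice : ∀ x ∈ Icc (w.re - r) (w.re + r),
      ENNReal.ofReal φb ≤ volume (Icc 0 (2 * π) ∩ verticalSlice S x) := by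
    rintro x ⟨hax, hxb⟩
    have hx : x0 ≤ x := by linarith
    exact (ENNReal.ofReal_le_ofReal ((hφ0mono x _ hx (by linarith)).trans (hφ x hx))).trans
      ENNReal.ofReal_toReal_le
  have hlow := le_volume_inter_reProdIm_of_periodic hSmeas Real.two_pi_pos
    (by push_cast; exact hSper) n (c := w.im - r) (d := w.im + r) (by linarith) hslice
  rw [add_sub_sub_cancel] at hlow
  rw [setOf_abs_sub_le_eq_reProdIm, volume_reProdIm measurableSet_Icc measurableSet_Icc,
    Real.volume_Icc, Real.volume_Icc, add_sub_sub_cancel, add_sub_sub_cancel,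
    ← ENNReal.ofReal_mul (by positivity), ENNReal.toReal_ofReal (by positivity),
    le_div_iff₀ (by positivity), ← ENNReal.ofReal_le_iff_le_toReal (measure_lt_top_of_subset
      inter_subset_right (isCompact_Icc.reProdIm isCompact_Icc).measure_lt_top.ne).ne]
  calc ENNReal.ofReal (1 / (4 * π) * φb * ((r + r) * (r + r)))
      = ENNReal.ofReal (r ^ 2 / π) * ENNReal.ofReal φb := by
        rw [← ENNReal.ofReal_mul (by positivity)]; ring_nf
    _ ≤ ENNReal.ofReal (r + r) * n * ENNReal.ofReal φb := by
        gcongr ?_ * _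
        rw [← ENNReal.ofReal_natCast, ← ENNReal.ofReal_mul (by positivity)]
        exact ENNReal.ofReal_le_ofReal ((div_le_iff₀ Real.pi_pos).2 (by nlinarith))
    _ ≤ _ := by rwa [mul_assoc]

/-- for a `2πi`-periodic measurable set `S ⊆ ℂ` whose vertical slice
measure `φ(x)` dominates a nonincreasing `φ0` on `[x0, ∞)`, the density of `S` in the
square `Q` centred at `w` of half-side `Re w / 64` is at least
`(1/(4π)) φ0((65/64) Re w)`, provided `Re w ≥ 64π` and `(63/64) Re w ≥ x0`. -/
theorem stmt17 (S : Set ℂ) (hSmeas : MeasurableSet S)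
    (hSper : (fun z => z + 2 * (π : ℂ) * Complex.I) '' S = S)
    (x0 : ℝ) (hx0 : 0 ≤ x0) (φ0 : ℝ → ℝ)
    (hφ0nn : ∀ x ≥ x0, 0 ≤ φ0 x)
    (hφ0mono : ∀ x y : ℝ, x0 ≤ x → x ≤ y → φ0 y ≤ φ0 x)
    (hφ : ∀ x ≥ x0, φ0 x ≤
      (volume {y : ℝ | y ∈ Set.Icc 0 (2 * π) ∧ ((x : ℂ) + (y : ℂ) * Complex.I) ∈ S}).toReal)
    (w : ℂ) (hw1 : 64 * π ≤ w.re) (hw2 : x0 ≤ 63 / 64 * w.re) :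
    (1 / (4 * π)) * φ0 (65 / 64 * w.re) ≤
      (volume (S ∩ {z : ℂ | |(z - w).re| ≤ w.re / 64 ∧ |(z - w).im| ≤ w.re / 64})).toReal /
        (volume {z : ℂ | |(z - w).re| ≤ w.re / 64 ∧ |(z - w).im| ≤ w.re / 64}).toReal :=
  stmt17_general S hSmeas hSper x0 φ0 hφ0mono hφ w hw1 hw2
end

section
/- Let f : ℂ → ℂ be a nonconstant entire function which is the limit, locally uniformly on ℂ, of a sequence of polynomials with real coefficients all of whose zeros are real. Then every zero of the derivative f' is real. -/
/-!
By Gauss–Lucas, the zeros of the derivative of a polynomial with only real zeros lie in their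
convex hull, hence on the real line. Derivatives converge locally uniformly along with the
functions, so on a disc around a non-real point `f'` is a uniform limit of polynomials without
zeros there. Since `f'` is not identically zero, Hurwitz's theorem shows it has no zero there
either.
-/

open Filter Metric Polynomial Set Topology

namespace Polynomial

theorem im_eq_zero_of_eval_derivative_eq_zero {P : ℂ[X]} (hP : derivative P ≠ 0)
    (hroots : ∀ z, P.eval z = 0 → z.im = 0) {z : ℂ} (hz : (derivative P).eval z = 0) :
    z.im = 0 := by
  have hdeg : 0 < P.degree := by
    by_contra! h
    exact hP (derivative_of_natDegree_zero (natDegree_eq_zero_iff_degree_le_zero.2 h))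
  have hreal : Convex ℝ {w : ℂ | w.im = 0} := convex_hyperplane Complex.imLm.isLinear 0
  have hsub : P.rootSet ℂ ⊆ {w : ℂ | w.im = 0} := fun w hw =>
    hroots w (by simpa using (mem_rootSet.1 hw).2)
  refine convexHull_min hsub hreal (rootSet_derivative_subset_convexHull_rootSet hdeg ?_)
  exact mem_rootSet.2 ⟨hP, by simpa using hz⟩

theorem tendstoLocallyUniformly_eval_derivative {ι : Type*} {l : Filter ι} {q : ι → ℂ[X]}
    {f : ℂ → ℂ} (h : TendstoLocallyUniformly (fun i z => (q i).eval z) f l) :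
    TendstoLocallyUniformly (fun i z => (derivative (q i)).eval z) (deriv f) l := by
  have hderiv := (tendstoLocallyUniformlyOn_univ.2 h).deriv
    (Eventually.of_forall fun i => (q i).differentiable.differentiableOn) isOpen_univ
  rw [tendstoLocallyUniformlyOn_univ] at hderiv
  convert hderiv using 1
  funext i z
  exact (Polynomial.deriv (q i)).symm

end Polynomial

namespace Complex

theorem le_norm_of_forall_mem_frontier_le_norm {E : Type*} [NormedAddCommGroup E]
    [NormedSpace ℂ E] [Nontrivial E] {g : E → ℂ} {U : Set E} (hU : Bornology.IsBounded U)
    (hd : DiffContOnCl ℂ g U)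
    (hne : ∀ z ∈ closure U, g z ≠ 0) {c : ℝ} (hc : ∀ z ∈ frontier U, c ≤ ‖g z‖) {z : E}
    (hz : z ∈ closure U) : c ≤ ‖g z‖ := by
  rcases le_or_gt c 0 with hc0 | hc0
  · exact hc0.trans (norm_nonneg _)
  have hinv : ‖g⁻¹ z‖ ≤ c⁻¹ := norm_le_of_forall_mem_frontier_norm_le hU (hd.inv hne)
    (fun w hw => by simpa using inv_anti₀ hc0 (hc w hw)) hz
  rw [Pi.inv_apply, norm_inv] at hinv
  exact (inv_le_inv₀ (norm_pos_iff.2 (hne z hz)) hc0).1 hinv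

/-- Hurwitz's theorem: by the minimum modulus principle, the approximants are bounded below at
the centre by half the minimum of `‖g‖` on the circle. -/
theorem ne_zero_of_tendstoUniformlyOn_closedBall {ι : Type*} {l : Filter ι} [l.NeBot]
    {F : ι → ℂ → ℂ} {g : ℂ → ℂ} {z₀ : ℂ} {r : ℝ} (hr : 0 < r)
    (hF : ∀ᶠ i in l, DiffContOnCl ℂ (F i) (ball z₀ r) ∧ ∀ z ∈ closedBall z₀ r, F i z ≠ 0)
    (hlim : TendstoUniformlyOn F g l (closedBall z₀ r)) (hg : ContinuousOn g (sphere z₀ r))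
    (hsph : ∀ z ∈ sphere z₀ r, g z ≠ 0) : g z₀ ≠ 0 := by
  intro hz₀
  obtain ⟨x, hx, hmin⟩ := (isCompact_sphere z₀ r).exists_isMinOn
    (NormedSpace.sphere_nonempty.2 hr.le) hg.norm
  have hm : 0 < ‖g x‖ := norm_pos_iff.2 (hsph x hx)
  obtain ⟨i, ⟨hdiff, hne⟩, hclose⟩ :=
    (hF.and (tendstoUniformlyOn_iff.1 hlim _ (half_pos hm))).exists
  have hfront : ∀ z ∈ frontier (ball z₀ r), ‖g x‖ / 2 ≤ ‖F i z‖ := by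
    intro z hz
    rw [frontier_ball z₀ hr.ne'] at hz
    have h1 : ‖g x‖ ≤ ‖g z‖ := hmin hz
    have h2 := hclose z (sphere_subset_closedBall hz)
    rw [dist_eq_norm] at h2
    linarith [norm_sub_norm_le (g z) (F i z)]
  have hlow := le_norm_of_forall_mem_frontier_le_norm isBounded_ball hdiff
    (by rwa [closure_ball z₀ hr.ne']) hfront
    (by rw [closure_ball z₀ hr.ne']; exact mem_closedBall_self hr.le)
  have hnear := hclose z₀ (mem_closedBall_self hr.le)
  rw [hz₀, dist_zero_left] at hnear
  linarith

theorem im_ne_zero_of_mem_closedBall {z z₀ : ℂ} {r : ℝ} (hz : z ∈ closedBall z₀ r)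
    (hr : r < |z₀.im|) : z.im ≠ 0 := by
  intro hreal
  have hfar : |z₀.im| ≤ dist z z₀ := by
    simpa [Complex.dist_eq, hreal] using abs_im_le_norm (z - z₀)
  linarith [mem_closedBall.1 hz]

end Complex

theorem Differentiable.exists_forall_mem_sphere_ne_zero {E : Type*} [NormedAddCommGroup E]
    [NormedSpace ℂ E] [CompleteSpace E] {g : ℂ → E} (hg : Differentiable ℂ g)
    (hg0 : ∃ w, g w ≠ 0) (z₀ : ℂ) {ε : ℝ} (hε : 0 < ε) :
    ∃ r, 0 < r ∧ r < ε ∧ ∀ z ∈ sphere z₀ r, g z ≠ 0 := by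
  have hpunct : ∀ᶠ z in 𝓝[≠] z₀, g z ≠ 0 := by
    rw [← not_frequently]
    intro hfreq
    obtain ⟨w, hw⟩ := hg0
    have hana : AnalyticOnNhd ℂ g univ := fun z _ => hg.analyticAt z
    exact hw (hana.eqOn_zero_of_preconnected_of_frequently_eq_zero isPreconnected_univ
      (mem_univ z₀) (by simpa using hfreq) (mem_univ w))
  obtain ⟨δ, hδ, hball⟩ := Metric.eventually_nhds_iff.1 (eventually_nhdsWithin_iff.1 hpunct)
  refine ⟨min ε δ / 2, by positivity, by linarith [min_le_left ε δ], fun z hz => ?_⟩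
  have hr := mem_sphere.1 hz
  refine hball (by linarith [min_le_right ε δ]) fun h => ?_
  rw [h, dist_self] at hr
  linarith [lt_min hε hδ]

/-- if a nonconstant entire function `f` is the locally uniform limit of
real polynomials all of whose zeros are real, then every zero of `f'` is real. -/
theorem stmt19 (f : ℂ → ℂ) (hf : Differentiable ℂ f)
    (hnonconst : ¬ ∃ c : ℂ, ∀ z : ℂ, f z = c)
    (p : ℕ → Polynomial ℝ)
    (hzeros : ∀ n : ℕ, ∀ z : ℂ, Polynomial.aeval z (p n) = 0 → z.im = 0)
    (hconv : TendstoLocallyUniformly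
      (fun n : ℕ => fun z : ℂ => (Polynomial.aeval z (p n) : ℂ)) f atTop) :
    ∀ z : ℂ, deriv f z = 0 → z.im = 0 := by
  set q : ℕ → ℂ[X] := fun n => (p n).map (algebraMap ℝ ℂ)
  have heval : ∀ n z, aeval z (p n) = (q n).eval z := fun n z => (eval_map_algebraMap _ _).symm
  have hq : TendstoLocallyUniformly (fun n z => (q n).eval z) f atTop := by
    simpa only [heval] using hconv
  have hf'ne : ∃ w, deriv f w ≠ 0 := by
    by_contra! h
    exact hnonconst ⟨f 0, fun z => is_const_of_deriv_eq_zero hf h z 0⟩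
  intro z₀ hz₀
  by_contra him
  obtain ⟨r, hr, hr_lt, hsph⟩ := hf.deriv.exists_forall_mem_sphere_ne_zero hf'ne z₀ (abs_pos.2 him)
  have hlim := (tendstoLocallyUniformly_iff_forall_isCompact.1
    (tendstoLocallyUniformly_eval_derivative hq)) _ (isCompact_closedBall z₀ r)
  refine Complex.ne_zero_of_tendstoUniformlyOn_closedBall hr ?_ hlim
    hf.deriv.continuous.continuousOn hsph hz₀
  have hsphere : z₀ + r ∈ sphere z₀ r := by simp [hr.le]
  filter_upwards [(hlim.tendsto_at (sphere_subset_closedBall hsphere)).eventually_ne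
    (hsph _ hsphere)] with n hn
  have hder : derivative (q n) ≠ 0 := fun h => hn (by simp [h])
  refine ⟨(derivative (q n)).differentiable.diffContOnCl, fun z hz hzero => ?_⟩
  exact Complex.im_ne_zero_of_mem_closedBall hz hr_lt
    (im_eq_zero_of_eval_derivative_eq_zero hder (fun w hw => hzeros n w (by rwa [heval])) hzero)
end
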